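/- Let n ≥ 1, λ > 0, A ∈ ℂ nonzero, ε ∈ ℂ with (2n+1)|ε| < 1, and define 𝔄(ξ) = [A (ξ/|ξ|)^{n+1} + ε \overline{A} (\overline{ξ}/|ξ|)^{n+1}] (ξ/|ξ|)^{-n} |ξ|^λ, 𝔄(0)=0. Then 𝔄 : ℂ → ℂ is injective. -/

import Mathlib

/-!
In polar coordinates `ξ = r u`, `𝔄(r u) = r^λ (A u + ε Ā ū^(2n+1))`, i.e. `𝔄 = A w + ε Ā Ψ(w)` with
`w = r^λ u` and `Ψ(r^λ u) = r^λ ū^(2n+1)`. The map `Ψ` is `(2n+1)`-Lipschitz, because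
`‖r u - s v‖² = (r - s)² + r s ‖u - v‖²` for unit `u, v` and `‖u^m - v^m‖ ≤ m ‖u - v‖`. Hence
`‖𝔄(ξ) - 𝔄(ζ)‖ ≥ (1 - (2n+1)‖ε‖) ‖A‖ ‖w(ξ) - w(ζ)‖`, and `ξ ↦ w(ξ) = |ξ|^(λ-1) ξ` is injective.
-/

open Complex

/-- The leading term `𝔄` of the hodographic representation. -/
noncomputable def frakA (n : ℕ) (lam : ℝ) (A ε : ℂ) (ξ : ℂ) : ℂ :=
  if ξ = 0 then 0 else
    (A * (ξ / (‖ξ‖ : ℝ)) ^ (n + 1) +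
        ε * (starRingEnd ℂ) A * ((starRingEnd ℂ) ξ / (‖ξ‖ : ℝ)) ^ (n + 1)) *
      (ξ / (‖ξ‖ : ℝ)) ^ (-(n : ℤ)) * ((‖ξ‖ ^ lam : ℝ) : ℂ)

open ComplexConjugate

theorem norm_pow_sub_pow_le_of_norm_le_one {R : Type*} [NormedCommRing R] [NormOneClass R]
    {x y : R} (hx : ‖x‖ ≤ 1) (hy : ‖y‖ ≤ 1) (m : ℕ) :
    ‖x ^ m - y ^ m‖ ≤ m * ‖x - y‖ := by
  have hpow : ∀ {z : R} (k : ℕ), ‖z‖ ≤ 1 → ‖z ^ k‖ ≤ 1 := fun k hz =>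
    (norm_pow_le _ k).trans (pow_le_one₀ (norm_nonneg _) hz)
  rw [← geom_sum₂_mul]
  refine (norm_mul_le _ _).trans (mul_le_mul_of_nonneg_right ?_ (norm_nonneg _))
  calc ‖∑ i ∈ Finset.range m, x ^ i * y ^ (m - 1 - i)‖
      ≤ ∑ i ∈ Finset.range m, ‖x ^ i * y ^ (m - 1 - i)‖ := norm_sum_le _ _
    _ ≤ ∑ _i ∈ Finset.range m, (1 : ℝ) := by
        gcongr with i
        exact (norm_mul_le _ _).trans <|
          mul_le_one₀ (hpow i hx) (norm_nonneg _) (hpow (m - 1 - i) hy)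
    _ = m := by simp

theorem norm_smul_sub_smul_sq_of_norm_eq_one {E : Type*} [NormedAddCommGroup E]
    [InnerProductSpace ℝ E] {u v : E} (hu : ‖u‖ = 1) (hv : ‖v‖ = 1) (r s : ℝ) :
    ‖r • u - s • v‖ ^ 2 = (r - s) ^ 2 + r * s * ‖u - v‖ ^ 2 := by
  rw [norm_sub_sq_real, norm_sub_sq_real, norm_smul, norm_smul, real_inner_smul_left,
    real_inner_smul_right, hu, hv, Real.norm_eq_abs, Real.norm_eq_abs, mul_one, mul_one,
    sq_abs, sq_abs]
  ring

theorem norm_smul_pow_sub_smul_pow_le {u v : ℂ} (hu : ‖u‖ = 1) (hv : ‖v‖ = 1) {r s : ℝ}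
    (hr : 0 ≤ r) (hs : 0 ≤ s) {m : ℕ} (hm : 1 ≤ m) :
    ‖r • u ^ m - s • v ^ m‖ ≤ m * ‖r • u - s • v‖ := by
  have hum : ‖u ^ m‖ = 1 := by rw [norm_pow, hu, one_pow]
  have hvm : ‖v ^ m‖ = 1 := by rw [norm_pow, hv, one_pow]
  have hm' : 1 ≤ (m : ℝ) ^ 2 := one_le_pow₀ (by exact_mod_cast hm)
  refine (pow_le_pow_iff_left₀ (norm_nonneg _) (by positivity) two_ne_zero).mp ?_
  rw [mul_pow, norm_smul_sub_smul_sq_of_norm_eq_one hum hvm,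
    norm_smul_sub_smul_sq_of_norm_eq_one hu hv]
  calc (r - s) ^ 2 + r * s * ‖u ^ m - v ^ m‖ ^ 2
      ≤ (m : ℝ) ^ 2 * (r - s) ^ 2 + r * s * (m * ‖u - v‖) ^ 2 := by
        gcongr
        · exact le_mul_of_one_le_left (sq_nonneg _) hm'
        · exact norm_pow_sub_pow_le_of_norm_le_one hu.le hv.le m
    _ = (m : ℝ) ^ 2 * ((r - s) ^ 2 + r * s * ‖u - v‖ ^ 2) := by ring

theorem frakA_ofReal_mul (n : ℕ) {lam : ℝ} (hlam : lam ≠ 0) (A ε : ℂ) {r : ℝ} (hr : 0 ≤ r)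
    {u : ℂ} (hu : ‖u‖ = 1) :
    frakA n lam A ε (r * u) = (r ^ lam : ℝ) * (A * u + ε * conj A * conj u ^ (2 * n + 1)) := by
  rcases hr.eq_or_lt with rfl | hr
  · simp [frakA, Real.zero_rpow hlam]
  have hr' : (r : ℂ) ≠ 0 := by exact_mod_cast hr.ne'
  have hu' : u ≠ 0 := norm_ne_zero_iff.mp (by rw [hu]; exact one_ne_zero)
  have hnorm : ‖(r : ℂ) * u‖ = r := by rw [norm_mul, hu, mul_one, Complex.norm_of_nonneg hr.le]
  have hcancel : u ^ (n + 1) * conj u ^ n = u := by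
    rw [pow_succ', mul_assoc, ← mul_pow, mul_conj', hu]
    simp
  rw [frakA, if_neg (mul_ne_zero hr' hu'), hnorm, map_mul, conj_ofReal,
    mul_div_cancel_left₀ _ hr', mul_div_cancel_left₀ _ hr', zpow_neg, zpow_natCast, ← inv_pow,
    inv_eq_conj hu]
  linear_combination (r ^ lam : ℝ) * A * hcancel

theorem mul_norm_sub_le_norm_sub_polar (A ε : ℂ) {u v : ℂ} (hu : ‖u‖ = 1) (hv : ‖v‖ = 1)
    {r s : ℝ} (hr : 0 ≤ r) (hs : 0 ≤ s) {m : ℕ} (hm : 1 ≤ m) :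
    (1 - m * ‖ε‖) * ‖A‖ * ‖(r : ℂ) * u - s * v‖ ≤
      ‖(r : ℂ) * (A * u + ε * conj A * conj u ^ m) - s * (A * v + ε * conj A * conj v ^ m)‖ := by
  set D := (r : ℂ) * u - s * v
  set E := (r : ℂ) * u ^ m - s * v ^ m
  have hE : ‖E‖ ≤ m * ‖D‖ := by
    simpa only [Complex.real_smul] using norm_smul_pow_sub_smul_pow_le hu hv hr hs hm
  calc (1 - m * ‖ε‖) * ‖A‖ * ‖D‖ = ‖A * D‖ - ‖ε * conj A‖ * (m * ‖D‖) := by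
        rw [norm_mul, norm_mul, norm_conj]; ring
    _ ≤ ‖A * D‖ - ‖ε * conj A * conj E‖ := by
        rw [norm_mul (ε * conj A), norm_conj]; gcongr
    _ ≤ ‖A * D + ε * conj A * conj E‖ := norm_sub_le_norm_add _ _
    _ = _ := by
        congr 1
        simp only [D, E, map_sub, map_mul, map_pow, conj_ofReal]
        ring

theorem ofReal_mul_eq_of_rpow_mul_eq {u v : ℂ} (hu : ‖u‖ = 1) (hv : ‖v‖ = 1) {r s : ℝ}
    (hr : 0 ≤ r) (hs : 0 ≤ s) {lam : ℝ} (hlam : lam ≠ 0)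
    (h : ((r ^ lam : ℝ) : ℂ) * u = ((s ^ lam : ℝ) : ℂ) * v) : (r : ℂ) * u = s * v := by
  have hrs : r = s := by
    have hnorm := congrArg norm h
    rw [norm_mul, norm_mul, hu, hv, Complex.norm_of_nonneg (Real.rpow_nonneg hr _),
      Complex.norm_of_nonneg (Real.rpow_nonneg hs _), mul_one, mul_one] at hnorm
    exact (Real.rpow_left_inj hr hs hlam).mp hnorm
  subst hrs
  rcases hr.eq_or_lt with rfl | hr
  · simp
  have hrlam : ((r ^ lam : ℝ) : ℂ) ≠ 0 := by exact_mod_cast (Real.rpow_pos_of_pos hr lam).ne'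
  rw [mul_left_cancel₀ hrlam h]

theorem frakA_injective_general (n : ℕ) (lam : ℝ) (A ε : ℂ)
    (hlam : 0 < lam) (hA : A ≠ 0) (hε : (2 * (n : ℝ) + 1) * ‖ε‖ < 1) :
    Function.Injective (frakA n lam A ε) := by
  intro ξ ζ h
  have hu := norm_exp_ofReal_mul_I (arg ξ)
  have hv := norm_exp_ofReal_mul_I (arg ζ)
  rw [← norm_mul_exp_arg_mul_I ξ, ← norm_mul_exp_arg_mul_I ζ,
    frakA_ofReal_mul n hlam.ne' A ε (norm_nonneg ξ) hu,
    frakA_ofReal_mul n hlam.ne' A ε (norm_nonneg ζ) hv] at h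
  have hC : 0 < (1 - ((2 * n + 1 : ℕ) : ℝ) * ‖ε‖) * ‖A‖ := by
    push_cast
    exact mul_pos (by linarith) (norm_pos_iff.mpr hA)
  have hbound := mul_norm_sub_le_norm_sub_polar A ε hu hv (Real.rpow_nonneg (norm_nonneg ξ) lam)
    (Real.rpow_nonneg (norm_nonneg ζ) lam) (Nat.le_add_left 1 (2 * n))
  rw [h, sub_self, norm_zero] at hbound
  have hw := sub_eq_zero.mp <| norm_le_zero_iff.mp <| nonpos_of_mul_nonpos_right hbound hC
  rw [← norm_mul_exp_arg_mul_I ξ, ← norm_mul_exp_arg_mul_I ζ]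
  exact ofReal_mul_eq_of_rpow_mul_eq hu hv (norm_nonneg ξ) (norm_nonneg ζ) hlam.ne' hw

theorem frakA_injective (n : ℕ) (lam : ℝ) (A ε : ℂ)
    (hn : 1 ≤ n) (hlam : 0 < lam) (hA : A ≠ 0) (hε : (2 * (n : ℝ) + 1) * ‖ε‖ < 1) :
    Function.Injective (frakA n lam A ε) :=
  frakA_injective_general n lam A ε hlam hA hε
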